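/- For every n ≥ 4, the domination polynomial of the cycle satisfies D(C_n, x) = x·(D(C_{n−1}, x) + D(C_{n−2}, x) + D(C_{n−3}, x)), with initial values D(C_1,x) = x, D(C_2,x) = x² + 2x, D(C_3,x) = x³ + 3x² + 3x. -/

import Mathlib

/-- The cycle graph `C_n` on vertex set `ZMod n`: two vertices are adjacent
iff they are distinct and differ by `1`. -/
def cycleG (n : ℕ) : SimpleGraph (ZMod n) where
  Adj u v := u ≠ v ∧ (u - v = 1 ∨ v - u = 1)
  symm := ⟨fun u v ⟨h1, h2⟩ => ⟨h1.symm, h2.symm⟩⟩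
  loopless := ⟨fun u ⟨h, _⟩ => h rfl⟩

/-- `S` is a dominating set of `G`: every vertex not in `S` is adjacent to a vertex of `S`. -/
def isDomSet {V : Type*} (G : SimpleGraph V) (S : Finset V) : Prop :=
  ∀ v, v ∉ S → ∃ u ∈ S, G.Adj u v

/-- `d(C_n, i)`: the number of dominating sets of `C_n` of cardinality `i`. -/
noncomputable def domCount (n i : ℕ) : ℕ :=
  Nat.card {S : Finset (ZMod n) // isDomSet (cycleG n) S ∧ S.card = i}

open Polynomial in
/-- The domination polynomial of the cycle `C_n`. -/
noncomputable def domPoly (n : ℕ) : Polynomial ℕ :=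
  ∑ i ∈ Finset.range (n + 1), Polynomial.C (domCount n i) * Polynomial.X ^ i

/-!
A set `S ⊆ ℤ/m` dominates `C_m` iff it meets every three consecutive vertices, i.e. iff all
cyclic gaps between consecutive elements of `S` are at most `3`. Recording `S` by its least
element `j`, its gaps in increasing order and the gap `w > j` that wraps around to `j` is a
bijection onto such data. For `m ≥ 4` there is a first gap `k ∈ {1, 2, 3}`, and deleting it turns
a code for `C_n` with `i + 1` elements into one for `C_{n-k}` with `i` elements. Hence
`d(C_n, i + 1) = d(C_{n-1}, i) + d(C_{n-2}, i) + d(C_{n-3}, i)`, which is the recurrence read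
coefficientwise; the initial values are computed by enumeration.
-/

theorem isDomSet_cycleG_iff {n : ℕ} (S : Finset (ZMod n)) :
    isDomSet (cycleG n) S ↔ ∀ v, v ∈ S ∨ v + 1 ∈ S ∨ v + 2 ∈ S := by
  constructor
  · intro h v
    by_contra! hv
    obtain ⟨u, hu, -, hadj⟩ := h (v + 1) hv.2.1
    rcases hadj with hadj | hadj
    · exact hv.2.2 (by rwa [show u = v + 2 by linear_combination hadj] at hu)
    · exact hv.1 (by rwa [show u = v by linear_combination -hadj] at hu)
  · intro h v hv
    rcases h (v - 1) with h | h | h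
    · exact ⟨v - 1, h, fun he => hv (he ▸ h), .inr (by ring)⟩
    · exact absurd (by simpa using h) hv
    · rw [show v - 1 + 2 = v + 1 by ring] at h
      exact ⟨v + 1, h, fun he => hv (he ▸ h), .inl (by ring)⟩

namespace List

theorem isChain_scanl_add_iff {d j : ℕ} {l : List ℕ} :
    (l.scanl (· + ·) j).IsChain (fun x y => x < y ∧ y ≤ x + d) ↔
      ∀ g ∈ l, 0 < g ∧ g ≤ d := by
  induction l generalizing j with
  | nil => simp
  | cons g t ih =>
    rw [scanl_cons, isChain_cons, head?_scanl, ih]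
    simp

theorem le_add_sum_of_mem_scanl_add {j x : ℕ} {l : List ℕ} (hx : x ∈ l.scanl (· + ·) j) :
    x ≤ j + l.sum := by
  induction l generalizing j with
  | nil => simp_all
  | cons g t ih =>
    rw [scanl_cons, mem_cons] at hx
    rcases hx with rfl | hx
    · simp
    · have := ih hx
      simp only [sum_cons]
      omega

theorem add_sum_mem_scanl_add (j : ℕ) (l : List ℕ) : j + l.sum ∈ l.scanl (· + ·) j := by
  induction l generalizing j with
  | nil => simp
  | cons g t ih =>
    rw [scanl_cons, sum_cons, ← add_assoc]
    exact mem_cons_of_mem _ (ih _)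

theorem scanl_add_inj {j j' : ℕ} {l l' : List ℕ}
    (h : l.scanl (· + ·) j = l'.scanl (· + ·) j') : j = j' ∧ l = l' := by
  induction l generalizing j j' l' with
  | nil =>
    cases l' with
    | nil => simpa using h
    | cons g' t' => simpa using congrArg length h
  | cons g t ih =>
    cases l' with
    | nil => simpa using congrArg length h
    | cons g' t' =>
      simp only [scanl_cons, cons.injEq] at h
      obtain ⟨rfl, h⟩ := h
      obtain ⟨hg, rfl⟩ := ih h
      exact ⟨rfl, by simpa using hg⟩

theorem exists_scanl_add_eq_of_isChain {d a c : ℕ} {L : List ℕ}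
    (h : (a :: L ++ [c]).IsChain (fun x y => x < y ∧ y ≤ x + d)) :
    ∃ l : List ℕ, l.scanl (· + ·) a = a :: L ∧ (∀ g ∈ l, 0 < g ∧ g ≤ d) ∧
      a + l.sum < c ∧ c ≤ a + l.sum + d := by
  induction L generalizing a with
  | nil => simpa using h
  | cons b L ih =>
    simp only [cons_append, isChain_cons_cons] at h ih
    obtain ⟨l, hl, hgaps, hlt, hle⟩ := ih h.2
    refine ⟨(b - a) :: l, ?_, ?_, ?_⟩
    · rw [scanl_cons, Nat.add_sub_cancel' h.1.1.le, hl]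
    · simpa [h.1.1, show b - a ≤ d by omega] using hgaps
    · simp only [sum_cons]
      omega

theorem mem_scanl_add_of_le_add_sum {j x : ℕ} {l : List ℕ} (hl : ∀ g ∈ l, g ≤ 3)
    (hjx : j ≤ x) (hx : x ≤ j + l.sum) :
    x ∈ l.scanl (· + ·) j ∨ x + 1 ∈ l.scanl (· + ·) j ∨
      x + 2 ∈ l.scanl (· + ·) j := by
  induction l generalizing j with
  | nil =>
    simp only [sum_nil, add_zero, scanl_nil, mem_cons, not_mem_nil, or_false] at hx ⊢
    omega
  | cons g t ih =>
    have hg := hl g mem_cons_self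
    have hnext : j + g ∈ t.scanl (· + ·) (j + g) := mem_of_mem_head? head?_scanl
    simp only [scanl_cons, mem_cons]
    by_cases hxg : x < j + g
    · by_cases hxj : x = j
      · exact .inl (.inl hxj)
      · obtain h | h : x + 1 = j + g ∨ x + 2 = j + g := by omega
        · exact .inr (.inl (.inr (h ▸ hnext)))
        · exact .inr (.inr (.inr (h ▸ hnext)))
    · rw [sum_cons, ← add_assoc] at hx
      rcases ih (fun g hg => hl g (mem_cons_of_mem _ hg)) (by omega) hx with h | h | h
      exacts [.inl (.inr h), .inr (.inl (.inr h)), .inr (.inr (.inr h))]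

theorem isChain_append_of_dense {P : ℕ → Prop} (hP : ∀ x, P x ∨ P (x + 1) ∨ P (x + 2))
    {a c : ℕ} {L : List ℕ} (hL : (a :: L).Pairwise (· < ·)) (hc : ∀ x ∈ a :: L, x < c)
    (hcover : ∀ x, a < x → x < c → P x → x ∈ L) :
    (a :: L ++ [c]).IsChain (fun x y => x < y ∧ y ≤ x + 3) := by
  have hnext (a : ℕ) : ∃ y, a < y ∧ y ≤ a + 3 ∧ P y := by
    rcases hP (a + 1) with h | h | h
    exacts [⟨_, by omega, by omega, h⟩, ⟨_, by omega, by omega, h⟩,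
      ⟨_, by omega, by omega, h⟩]
  induction L generalizing a with
  | nil =>
    obtain ⟨y, hay, hya, hPy⟩ := hnext a
    have hcy : c ≤ y := by
      by_contra! hyc
      simpa using hcover y hay hyc hPy
    simp only [cons_append, nil_append, isChain_cons_cons, isChain_singleton, and_true]
    exact ⟨hc a mem_cons_self, by omega⟩
  | cons b L ih =>
    obtain ⟨y, hay, hya, hPy⟩ := hnext a
    rw [pairwise_cons] at hL
    have hab := hL.1 b mem_cons_self
    have hby : b ≤ y := by
      by_cases hyc : y < c
      · rcases mem_cons.mp (hcover y hay hyc hPy) with rfl | hy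
        exacts [le_rfl, ((pairwise_cons.mp hL.2).1 y hy).le]
      · have := hc b (mem_cons_of_mem _ mem_cons_self)
        omega
    simp only [cons_append, isChain_cons_cons] at ih ⊢
    refine ⟨⟨hab, by omega⟩, ih hL.2 (fun x hx => hc x (mem_cons_of_mem _ hx)) ?_⟩
    intro x hbx hxc hPx
    rcases mem_cons.mp (hcover x (hab.trans hbx) hxc hPx) with rfl | hx
    exacts [absurd hbx (lt_irrefl _), hx]

end List

section SortedValues

variable {m : ℕ} [NeZero m]

theorem mem_sort_image_val {S : Finset (ZMod m)} {x : ℕ} :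
    x ∈ (S.image ZMod.val).sort (· ≤ ·) ↔ x < m ∧ (x : ZMod m) ∈ S := by
  rw [Finset.mem_sort, Finset.mem_image]
  constructor
  · rintro ⟨v, hv, rfl⟩
    exact ⟨v.val_lt, by rwa [ZMod.natCast_zmod_val]⟩
  · rintro ⟨hx, hxS⟩
    exact ⟨x, hxS, ZMod.val_cast_of_lt hx⟩

theorem length_sort_image_val (S : Finset (ZMod m)) :
    ((S.image ZMod.val).sort (· ≤ ·)).length = S.card := by
  rw [Finset.length_sort, Finset.card_image_of_injective _ (ZMod.val_injective m)]

theorem isChain_sort_image_val_append {S : Finset (ZMod m)}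
    (hS : ∀ v, v ∈ S ∨ v + 1 ∈ S ∨ v + 2 ∈ S) {a : ℕ} {L : List ℕ}
    (hsort : (S.image ZMod.val).sort (· ≤ ·) = a :: L) :
    (a :: L ++ [a + m]).IsChain (fun x y => x < y ∧ y ≤ x + 3) := by
  have hmem (x : ℕ) : x ∈ a :: L ↔ x < m ∧ (x : ZMod m) ∈ S :=
    hsort ▸ mem_sort_image_val
  have hsorted : (a :: L).Pairwise (· < ·) := hsort ▸ (Finset.sortedLT_sort _).pairwise
  refine List.isChain_append_of_dense (P := fun x => (x : ZMod m) ∈ S)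
    (fun x => by simpa using hS x) hsorted (fun x hx => by have := ((hmem x).mp hx).1; omega) ?_
  intro x hax hxm hxS
  by_cases hx : x < m
  · exact (List.mem_cons.mp ((hmem x).mpr ⟨hx, hxS⟩)).resolve_left (by omega)
  · have ham := ((hmem a).mp List.mem_cons_self).1
    have hxm' : x - m ∈ a :: L := (hmem _).mpr
      ⟨by omega, by rwa [Nat.cast_sub (by omega), ZMod.natCast_self, sub_zero]⟩
    rcases List.mem_cons.mp hxm' with h | h
    · exact absurd h (by omega)
    · have := (List.pairwise_cons.mp hsorted).1 _ h
      omega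

end SortedValues

/-- A dominating set of `C_m` of size `i`, recorded by its least element `start` (as a natural
number), the distances `gaps` between its consecutive elements, and the distance `wrap` from its
largest element around the cycle back to `start`; `start < wrap` says that `start` is the least
element. -/
@[ext]
structure GapCode (m i : ℕ) where
  start : ℕ
  gaps : List ℕ
  wrap : ℕ
  gaps_mem : ∀ g ∈ gaps, 0 < g ∧ g ≤ 3
  wrap_le : wrap ≤ 3
  start_lt_wrap : start < wrap
  sum_add_wrap : gaps.sum + wrap = m
  length_add_one : gaps.length + 1 = i

namespace GapCode

variable {m n i : ℕ}

def positions (c : GapCode m i) : List ℕ := c.gaps.scanl (· + ·) c.start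

def toFinset (c : GapCode m i) : Finset (ZMod m) := (c.positions.map (↑)).toFinset

theorem positions_pairwise (c : GapCode m i) : c.positions.Pairwise (· < ·) :=
  ((List.isChain_scanl_add_iff.mpr c.gaps_mem).imp fun _ _ h => h.1).pairwise

theorem lt_of_mem_positions (c : GapCode m i) {x : ℕ} (hx : x ∈ c.positions) : x < m := by
  have := List.le_add_sum_of_mem_scanl_add hx
  have := c.sum_add_wrap
  have := c.start_lt_wrap
  omega

theorem card_toFinset (c : GapCode m i) : c.toFinset.card = i := by
  have hnodup : (c.positions.map (Nat.cast : ℕ → ZMod m)).Nodup :=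
    c.positions_pairwise.nodup.map_on fun x hx y hy hxy => by
      simpa [ZMod.val_cast_of_lt (c.lt_of_mem_positions hx),
        ZMod.val_cast_of_lt (c.lt_of_mem_positions hy)] using congrArg ZMod.val hxy
  rw [toFinset, List.toFinset_card_of_nodup hnodup, List.length_map, positions, List.length_scanl,
    c.length_add_one]

theorem natCast_mem_toFinset (c : GapCode m i) {x : ℕ} (hx : x ∈ c.positions) :
    (x : ZMod m) ∈ c.toFinset :=
  List.mem_toFinset.mpr (List.mem_map_of_mem hx)

theorem toFinset_dense (c : GapCode m i) (v : ZMod m) :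
    v ∈ c.toFinset ∨ v + 1 ∈ c.toFinset ∨ v + 2 ∈ c.toFinset := by
  have hsum := c.sum_add_wrap
  have hwrap := c.wrap_le
  have hstart := c.start_lt_wrap
  have : NeZero m := ⟨by omega⟩
  -- `start + m` is a second copy of `start`, closing the gap `wrap`
  have hnear (x : ℕ) (hsx : c.start ≤ x) (hxm : x ≤ c.start + m) :
      (x : ZMod m) ∈ c.toFinset ∨ ((x + 1 : ℕ) : ZMod m) ∈ c.toFinset ∨
        ((x + 2 : ℕ) : ZMod m) ∈ c.toFinset := by
    by_cases hx : x ≤ c.start + c.gaps.sum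
    · rcases List.mem_scanl_add_of_le_add_sum (fun g hg => (c.gaps_mem g hg).2) hsx hx
        with h | h | h
      exacts [.inl (c.natCast_mem_toFinset h), .inr (.inl (c.natCast_mem_toFinset h)),
        .inr (.inr (c.natCast_mem_toFinset h))]
    · have hmem : ((c.start + m : ℕ) : ZMod m) ∈ c.toFinset := by
        rw [Nat.cast_add, ZMod.natCast_self, add_zero]
        exact c.natCast_mem_toFinset (List.mem_of_mem_head? List.head?_scanl)
      obtain h | h | h : x = c.start + m ∨ x + 1 = c.start + m ∨ x + 2 = c.start + m := by omega
      exacts [.inl (h ▸ hmem), .inr (.inl (h ▸ hmem)), .inr (.inr (h ▸ hmem))]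
  obtain ⟨x, hsx, hxm, rfl⟩ :
      ∃ x, c.start ≤ x ∧ x ≤ c.start + m ∧ (x : ZMod m) = v := by
    by_cases hv : c.start ≤ v.val
    · exact ⟨v.val, hv, by have := v.val_lt; omega, ZMod.natCast_zmod_val v⟩
    · refine ⟨v.val + m, by omega, by omega, ?_⟩
      rw [Nat.cast_add, ZMod.natCast_self, add_zero, ZMod.natCast_zmod_val]
  simpa using hnear x hsx hxm

theorem sort_image_val_toFinset (c : GapCode m i) :
    (c.toFinset.image ZMod.val).sort (· ≤ ·) = c.positions := by
  have himage : c.toFinset.image ZMod.val = c.positions.toFinset := by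
    ext x
    simp only [toFinset, Finset.mem_image, List.mem_toFinset, List.mem_map]
    constructor
    · rintro ⟨_, ⟨y, hy, rfl⟩, rfl⟩
      rwa [ZMod.val_cast_of_lt (c.lt_of_mem_positions hy)]
    · intro hx
      exact ⟨x, ⟨x, hx, rfl⟩, ZMod.val_cast_of_lt (c.lt_of_mem_positions hx)⟩
  rw [himage, List.toFinset_sort _ c.positions_pairwise.nodup]
  exact c.positions_pairwise.imp le_of_lt

theorem toFinset_injective : Function.Injective (toFinset : GapCode m i → Finset (ZMod m)) := by
  intro c c' h
  have hpos := c.sort_image_val_toFinset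
  rw [h, c'.sort_image_val_toFinset] at hpos
  obtain ⟨hstart, hgaps⟩ := List.scanl_add_inj hpos.symm
  have hsum := c.sum_add_wrap
  have hsum' := c'.sum_add_wrap
  rw [hgaps] at hsum
  exact GapCode.ext hstart hgaps (by omega)

theorem exists_toFinset_eq (hm : 0 < m) {S : Finset (ZMod m)}
    (hS : ∀ v, v ∈ S ∨ v + 1 ∈ S ∨ v + 2 ∈ S) (hcard : S.card = i) :
    ∃ c : GapCode m i, c.toFinset = S := by
  have : NeZero m := NeZero.of_pos hm
  obtain ⟨a, L, hsort⟩ : ∃ a L, (S.image ZMod.val).sort (· ≤ ·) = a :: L := by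
    obtain ⟨v, hv⟩ : S.Nonempty := by rcases hS 0 with h | h | h <;> exact ⟨_, h⟩
    cases h : (S.image ZMod.val).sort (· ≤ ·) with
    | nil =>
      have := (mem_sort_image_val (S := S) (x := v.val)).mpr ⟨v.val_lt, by simpa using hv⟩
      simp [h] at this
    | cons a L => exact ⟨a, L, rfl⟩
  have hmem (x : ℕ) : x ∈ a :: L ↔ x < m ∧ (x : ZMod m) ∈ S :=
    hsort ▸ mem_sort_image_val
  obtain ⟨l, hl, hgaps, hlt, hle⟩ :=
    List.exists_scanl_add_eq_of_isChain (isChain_sort_image_val_append hS hsort)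
  have hlast : a + l.sum < m := ((hmem _).mp (hl ▸ List.add_sum_mem_scanl_add a l)).1
  have hlen : l.length + 1 = i := by
    rw [← List.length_scanl (f := (· + ·)) (init := a), hl, ← hsort, length_sort_image_val,
      hcard]
  refine ⟨⟨a, l, a + m - (a + l.sum), hgaps, by omega, by omega, by omega, hlen⟩, ?_⟩
  ext v
  simp only [toFinset, positions, hl, List.mem_toFinset, List.mem_map]
  constructor
  · rintro ⟨x, hx, rfl⟩
    exact ((hmem x).mp hx).2
  · intro hv
    exact ⟨v.val, (hmem _).mpr ⟨v.val_lt, by rwa [ZMod.natCast_zmod_val]⟩,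
      ZMod.natCast_zmod_val v⟩

noncomputable def equivDomSets (hm : 0 < m) :
    GapCode m i ≃ {S : Finset (ZMod m) // isDomSet (cycleG m) S ∧ S.card = i} :=
  Equiv.ofBijective
    (fun c => ⟨c.toFinset, (isDomSet_cycleG_iff _).mpr c.toFinset_dense, c.card_toFinset⟩)
    ⟨fun _ _ h => toFinset_injective (congrArg Subtype.val h), fun S => by
      obtain ⟨c, hc⟩ := exists_toFinset_eq hm ((isDomSet_cycleG_iff _).mp S.2.1) S.2.2
      exact ⟨c, Subtype.ext hc⟩⟩

theorem finite (hm : 0 < m) : Finite (GapCode m i) :=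
  have : NeZero m := NeZero.of_pos hm
  Finite.of_equiv _ (equivDomSets hm).symm

theorem isEmpty_zero : IsEmpty (GapCode m 0) :=
  ⟨fun c => by have := c.length_add_one; omega⟩

theorem isEmpty_of_lt (h : m < i) : IsEmpty (GapCode m i) := by
  refine ⟨fun c => ?_⟩
  have := List.length_le_sum_of_one_le c.gaps fun g hg => (c.gaps_mem g hg).1
  have := c.sum_add_wrap
  have := c.length_add_one
  have := c.start_lt_wrap
  omega

def cons (k : ℕ) (hk : 0 < k ∧ k ≤ 3) (hkn : k ≤ n) (c : GapCode (n - k) i) :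
    GapCode n (i + 1) where
  start := c.start
  gaps := k :: c.gaps
  wrap := c.wrap
  gaps_mem := List.forall_mem_cons.mpr ⟨hk, c.gaps_mem⟩
  wrap_le := c.wrap_le
  start_lt_wrap := c.start_lt_wrap
  sum_add_wrap := by
    have := c.sum_add_wrap
    rw [List.sum_cons]
    omega
  length_add_one := by simp [c.length_add_one]

theorem exists_cons_eq {k : ℕ} {t : List ℕ} (hk : 0 < k ∧ k ≤ 3) (hkn : k ≤ n)
    (c : GapCode n (i + 1)) (h : c.gaps = k :: t) :
    ∃ d : GapCode (n - k) i, cons k hk hkn d = c := by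
  have hsum := c.sum_add_wrap
  have hlen := c.length_add_one
  rw [h, List.sum_cons] at hsum
  rw [h, List.length_cons] at hlen
  refine ⟨⟨c.start, t, c.wrap, fun g hg => c.gaps_mem g (h ▸ List.mem_cons_of_mem _ hg),
    c.wrap_le, c.start_lt_wrap, by omega, by omega⟩, GapCode.ext rfl h.symm rfl⟩

def consSum (hn : 4 ≤ n) :
    (GapCode (n - 1) i ⊕ GapCode (n - 2) i) ⊕ GapCode (n - 3) i → GapCode n (i + 1) :=
  Sum.elim (Sum.elim (cons 1 (by omega) (by omega)) (cons 2 (by omega) (by omega)))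
    (cons 3 (by omega) (by omega))

theorem consSum_injective (hn : 4 ≤ n) : Function.Injective (consSum (i := i) hn) := by
  rintro ((c | c) | c) ((d | d) | d) h <;>
    simp_all [consSum, cons, GapCode.ext_iff]

theorem consSum_surjective (hn : 4 ≤ n) : Function.Surjective (consSum (i := i) hn) := by
  intro c
  obtain ⟨k, t, h⟩ : ∃ k t, c.gaps = k :: t := by
    cases hg : c.gaps with
    | nil =>
      have hsum := c.sum_add_wrap
      rw [hg, List.sum_nil] at hsum
      have := c.wrap_le
      omega
    | cons k t => exact ⟨k, t, rfl⟩
  have hk := c.gaps_mem k (h ▸ List.mem_cons_self)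
  obtain rfl | rfl | rfl : k = 1 ∨ k = 2 ∨ k = 3 := by omega
  · obtain ⟨d, rfl⟩ := exists_cons_eq (by omega) (by omega) c h
    exact ⟨.inl (.inl d), rfl⟩
  · obtain ⟨d, rfl⟩ := exists_cons_eq (by omega) (by omega) c h
    exact ⟨.inl (.inr d), rfl⟩
  · obtain ⟨d, rfl⟩ := exists_cons_eq (by omega) (by omega) c h
    exact ⟨.inr d, rfl⟩

end GapCode

theorem domCount_eq_card_gapCode {m : ℕ} (hm : 0 < m) (i : ℕ) :
    domCount m i = Nat.card (GapCode m i) :=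
  (Nat.card_congr (GapCode.equivDomSets hm)).symm

theorem domCount_zero {m : ℕ} (hm : 0 < m) : domCount m 0 = 0 := by
  have := GapCode.isEmpty_zero (m := m)
  rw [domCount_eq_card_gapCode hm, Nat.card_of_isEmpty]

theorem domCount_eq_zero_of_lt {m i : ℕ} (hm : 0 < m) (h : m < i) : domCount m i = 0 := by
  have := GapCode.isEmpty_of_lt h
  rw [domCount_eq_card_gapCode hm, Nat.card_of_isEmpty]

theorem domCount_succ {n : ℕ} (hn : 4 ≤ n) (i : ℕ) :
    domCount n (i + 1) = domCount (n - 1) i + domCount (n - 2) i + domCount (n - 3) i := by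
  have := GapCode.finite (m := n - 1) (i := i) (by omega)
  have := GapCode.finite (m := n - 2) (i := i) (by omega)
  have := GapCode.finite (m := n - 3) (i := i) (by omega)
  simp only [domCount_eq_card_gapCode (by omega : 0 < n),
    domCount_eq_card_gapCode (by omega : 0 < n - 1),
    domCount_eq_card_gapCode (by omega : 0 < n - 2),
    domCount_eq_card_gapCode (by omega : 0 < n - 3)]
  rw [← Nat.card_eq_of_bijective _
      ⟨GapCode.consSum_injective hn, GapCode.consSum_surjective hn⟩,
    Nat.card_sum, Nat.card_sum]

theorem domCount_eq_card_filter (n i : ℕ) [NeZero n] :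
    domCount n i = (Finset.univ.filter fun S : Finset (ZMod n) =>
      (∀ v, v ∈ S ∨ v + 1 ∈ S ∨ v + 2 ∈ S) ∧ S.card = i).card := by
  simp only [domCount, isDomSet_cycleG_iff, Nat.card_eq_fintype_card, Fintype.card_subtype]

section Polynomials

open Polynomial

theorem coeff_domPoly {n : ℕ} (hn : 0 < n) (i : ℕ) : (domPoly n).coeff i = domCount n i := by
  simp only [domPoly, finsetSum_coeff, coeff_C_mul_X_pow, Finset.sum_ite_eq, Finset.mem_range]
  split_ifs with h
  · rfl
  · exact (domCount_eq_zero_of_lt hn (by omega)).symm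

theorem domPoly_eq_X_mul {n : ℕ} (hn : 4 ≤ n) :
    domPoly n = X * (domPoly (n - 1) + domPoly (n - 2) + domPoly (n - 3)) := by
  ext (_ | i)
  · rw [coeff_X_mul_zero, coeff_domPoly (by omega), domCount_zero (by omega)]
  · rw [coeff_X_mul, coeff_add, coeff_add, coeff_domPoly (by omega), coeff_domPoly (by omega),
      coeff_domPoly (by omega), coeff_domPoly (by omega), domCount_succ hn]

theorem domPoly_one : domPoly 1 = X := by
  have h1 : domCount 1 1 = 1 := by rw [domCount_eq_card_filter]; decide
  simp [domPoly, Finset.sum_range_succ, domCount_zero, h1]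

theorem domPoly_two : domPoly 2 = X ^ 2 + 2 * X := by
  have h1 : domCount 2 1 = 2 := by rw [domCount_eq_card_filter]; decide
  have h2 : domCount 2 2 = 1 := by rw [domCount_eq_card_filter]; decide
  simp [domPoly, Finset.sum_range_succ, domCount_zero, h1, h2, add_comm]

theorem domPoly_three : domPoly 3 = X ^ 3 + 3 * X ^ 2 + 3 * X := by
  have h1 : domCount 3 1 = 3 := by rw [domCount_eq_card_filter]; decide
  have h2 : domCount 3 2 = 3 := by rw [domCount_eq_card_filter]; decide
  have h3 : domCount 3 3 = 1 := by rw [domCount_eq_card_filter]; decide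
  simp [domPoly, Finset.sum_range_succ, domCount_zero, h1, h2, h3, add_assoc, add_comm]

end Polynomials

open Polynomial in
theorem domPoly_recurrence :
    (∀ n : ℕ, 4 ≤ n →
        domPoly n = X * (domPoly (n - 1) + domPoly (n - 2) + domPoly (n - 3))) ∧
      domPoly 1 = X ∧ domPoly 2 = X ^ 2 + 2 * X ∧
      domPoly 3 = X ^ 3 + 3 * X ^ 2 + 3 * X :=
  ⟨fun _ hn => domPoly_eq_X_mul hn, domPoly_one, domPoly_two, domPoly_three⟩
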